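/- Let f be an electrical s-t flow on a graph G with resistances r, and suppose edge h satisfies f(h)²·r_h = β·E_r(f) with 0 ≤ β ≤ 1. If the resistance of h is multiplied by (1+ε) for 0 < ε ≤ 1 (other resistances unchanged, giving r'), then R_eff(r') ≥ (1 + εβ/2)·R_eff(r). -/

import Mathlib

open Finset

/- The potential φ of the electrical flow stays admissible after the change, and its energy
drops by the fraction ε/(1+ε) of the share β of edge h; so Ceff(r') ≤ (1 - εβ/(1+ε)) Ceff(r),
and (1 + εβ/2)(1 - εβ/(1+ε)) ≤ 1 for ε ≤ 1. The bound r' ≤ (1+ε) r keeps Ceff(r') positive, so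
this inverts to the claim about Reff. -/

/-- Effective s-t conductance: infimum over potentials with φ(s)=1, φ(t)=0 of the
Dirichlet energy. -/
noncomputable def Ceff {V E : Type*} [Fintype E] (ep : E → V × V) (s t : V)
    (r : E → ℝ) : ℝ :=
  sInf {x | ∃ φ : V → ℝ, φ s = 1 ∧ φ t = 0 ∧
    x = ∑ e, (φ (ep e).1 - φ (ep e).2) ^ 2 / r e}

/-- Effective s-t resistance. -/
noncomputable def Reff {V E : Type*} [Fintype E] (ep : E → V × V) (s t : V)
    (r : E → ℝ) : ℝ :=
  1 / Ceff ep s t r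

noncomputable def dirichletEnergy {V E : Type*} [Fintype E] (ep : E → V × V) (r : E → ℝ)
    (φ : V → ℝ) : ℝ :=
  ∑ e, (φ (ep e).1 - φ (ep e).2) ^ 2 / r e

section Energy

variable {V E : Type*} [Fintype E] (ep : E → V × V)

theorem ceff_eq_sInf_image (s t : V) (r : E → ℝ) :
    Ceff ep s t r = sInf (dirichletEnergy ep r '' {φ | φ s = 1 ∧ φ t = 0}) := by
  unfold Ceff dirichletEnergy
  congr 1
  ext x
  simp [eq_comm, and_assoc]

theorem dirichletEnergy_nonneg {r : E → ℝ} (hr : ∀ e, 0 ≤ r e) (φ : V → ℝ) :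
    0 ≤ dirichletEnergy ep r φ :=
  Finset.sum_nonneg fun e _ => div_nonneg (sq_nonneg _) (hr e)

theorem ceff_le_dirichletEnergy {s t : V} {r : E → ℝ} (hr : ∀ e, 0 ≤ r e) {φ : V → ℝ}
    (hs : φ s = 1) (ht : φ t = 0) : Ceff ep s t r ≤ dirichletEnergy ep r φ := by
  rw [ceff_eq_sInf_image]
  refine csInf_le ⟨0, ?_⟩ (Set.mem_image_of_mem _ ⟨hs, ht⟩)
  rintro _ ⟨ψ, -, rfl⟩
  exact dirichletEnergy_nonneg ep hr ψ

theorem ceff_div_le_ceff_of_le_mul {s t : V} (hst : s ≠ t) {r r' : E → ℝ} {c : ℝ}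
    (hc : 0 < c) (hr' : ∀ e, 0 < r' e) (hle : ∀ e, r' e ≤ c * r e) :
    Ceff ep s t r / c ≤ Ceff ep s t r' := by
  have hr : ∀ e, 0 ≤ r e := fun e => (pos_of_mul_pos_right ((hr' e).trans_le (hle e)) hc.le).le
  have hadm : {φ : V → ℝ | φ s = 1 ∧ φ t = 0}.Nonempty := by
    classical
    exact ⟨fun v => if v = s then 1 else 0, by simp [Ne.symm hst]⟩
  rw [ceff_eq_sInf_image ep s t r']
  refine le_csInf (hadm.image _) ?_
  rintro _ ⟨ψ, ⟨hs, ht⟩, rfl⟩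
  calc Ceff ep s t r / c ≤ dirichletEnergy ep r ψ / c := by
        gcongr
        exact ceff_le_dirichletEnergy ep hr hs ht
    _ = ∑ e, (ψ (ep e).1 - ψ (ep e).2) ^ 2 / (c * r e) := by
        simp only [dirichletEnergy, Finset.sum_div, div_mul_eq_div_div_swap]
    _ ≤ dirichletEnergy ep r' ψ :=
        Finset.sum_le_sum fun e _ => div_le_div_of_nonneg_left (sq_nonneg _) (hr' e) (hle e)

theorem dirichletEnergy_of_scale_edge [DecidableEq E] {r r' : E → ℝ} {h : E} {c : ℝ}
    (hr' : ∀ e, r' e = if e = h then c * r e else r e) (φ : V → ℝ) :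
    dirichletEnergy ep r' φ =
      dirichletEnergy ep r φ - (1 - c⁻¹) * ((φ (ep h).1 - φ (ep h).2) ^ 2 / r h) := by
  have hdiff : dirichletEnergy ep r' φ - dirichletEnergy ep r φ =
      (φ (ep h).1 - φ (ep h).2) ^ 2 / r' h - (φ (ep h).1 - φ (ep h).2) ^ 2 / r h := by
    rw [dirichletEnergy, dirichletEnergy, ← Finset.sum_sub_distrib]
    refine Finset.sum_eq_single h (fun e _ he => ?_) (by simp)
    simp [hr' e, he]
  rw [hr' h, if_pos rfl] at hdiff
  linear_combination hdiff

theorem sum_mul_sq_eq_dirichletEnergy {r f : E → ℝ} {φ : V → ℝ} (hr : ∀ e, r e ≠ 0)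
    (hOhm : ∀ e, f e = (φ (ep e).1 - φ (ep e).2) / r e) :
    ∑ e, r e * f e ^ 2 = dirichletEnergy ep r φ :=
  Finset.sum_congr rfl fun e _ => by
    rw [hOhm e]
    field_simp [hr e]

end Energy

theorem one_add_half_mul_mul_one_sub_le_one {β ε : ℝ} (hβ : 0 ≤ β) (hε0 : 0 ≤ ε)
    (hε1 : ε ≤ 1) : (1 + ε * β / 2) * (1 - (1 - (1 + ε)⁻¹) * β) ≤ 1 := by
  have hhalf : ε * β / 2 ≤ (1 - (1 + ε)⁻¹) * β := by
    have hinv : (1 + ε)⁻¹ ≤ 1 - ε / 2 := by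
      rw [inv_le_iff_one_le_mul₀ (by linarith)]
      nlinarith
    nlinarith
  nlinarith [mul_nonneg hε0 hβ]

theorem reff_increase_of_slight_scaling_general {V E : Type*} [Fintype E]
    [DecidableEq E]
    (ep : E → V × V) (s t : V) (hst : s ≠ t)
    (r r' : E → ℝ) (hr : ∀ e, 0 < r e)
    (f : E → ℝ) (φ : V → ℝ) (h : E) (β ε : ℝ)
    (hβ0 : 0 ≤ β) (hε0 : 0 < ε) (hε1 : ε ≤ 1)
    (hφs : φ s = 1) (hφt : φ t = 0)
    (hmin : ∑ e, (φ (ep e).1 - φ (ep e).2) ^ 2 / r e = Ceff ep s t r)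
    (hOhm : ∀ e, f e = (φ (ep e).1 - φ (ep e).2) / r e)
    (hβ : f h ^ 2 * r h = β * ∑ e, r e * f e ^ 2)
    (hr' : ∀ e, r' e = if e = h then (1 + ε) * r e else r e) :
    Reff ep s t r' ≥ (1 + ε * β / 2) * Reff ep s t r := by
  rw [Reff, Reff, ge_iff_le, mul_one_div]
  set C := Ceff ep s t r
  have hε : (0 : ℝ) < 1 + ε := by linarith
  have hle : ∀ e, r' e ≤ (1 + ε) * r e := fun e => by
    rw [hr' e]; split_ifs <;> nlinarith [hr e]
  have hr'pos : ∀ e, 0 < r' e := fun e => by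
    rw [hr' e]; split_ifs <;> nlinarith [hr e]
  have hCφ : dirichletEnergy ep r φ = C := hmin
  have hshare : (φ (ep h).1 - φ (ep h).2) ^ 2 / r h = β * C := by
    rw [← hCφ, ← sum_mul_sq_eq_dirichletEnergy ep (fun e => (hr e).ne') hOhm, ← hβ, hOhm h]
    field_simp [(hr h).ne']
  have hlower : C / (1 + ε) ≤ Ceff ep s t r' :=
    ceff_div_le_ceff_of_le_mul ep hst hε hr'pos hle
  have hupper : Ceff ep s t r' ≤ (1 - (1 - (1 + ε)⁻¹) * β) * C := by
    calc Ceff ep s t r' ≤ dirichletEnergy ep r' φ :=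
          ceff_le_dirichletEnergy ep (fun e => (hr'pos e).le) hφs hφt
      _ = (1 - (1 - (1 + ε)⁻¹) * β) * C := by
          rw [dirichletEnergy_of_scale_edge ep hr', hCφ, hshare]; ring
  have hC : 0 ≤ C := hCφ ▸ dirichletEnergy_nonneg ep (fun e => (hr e).le) φ
  rcases hC.eq_or_lt with hC0 | hCpos
  · rw [← hC0, div_zero, one_div_nonneg]
    simpa [← hC0] using hlower
  have hC'pos : 0 < Ceff ep s t r' := (div_pos hCpos hε).trans_le hlower
  rw [div_le_div_iff₀ hCpos hC'pos]
  nlinarith [one_add_half_mul_mul_one_sub_le_one hβ0 hε0.le hε1, mul_nonneg hε0.le hβ0]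

/-- If an edge `h` accounts for a β fraction of the energy of the electrical s-t flow
(0 ≤ β ≤ 1) and its resistance is multiplied by (1+ε) with 0 < ε ≤ 1, the effective
resistance increases by a factor of at least (1 + εβ/2). -/
theorem reff_increase_of_slight_scaling {V E : Type*} [Fintype V] [Fintype E]
    [DecidableEq E]
    (ep : E → V × V) (s t : V) (hst : s ≠ t)
    (r r' : E → ℝ) (hr : ∀ e, 0 < r e)
    (f : E → ℝ) (φ : V → ℝ) (h : E) (β ε : ℝ)
    (hβ0 : 0 ≤ β) (hβ1 : β ≤ 1) (hε0 : 0 < ε) (hε1 : ε ≤ 1)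
    (hφs : φ s = 1) (hφt : φ t = 0)
    (hmin : ∑ e, (φ (ep e).1 - φ (ep e).2) ^ 2 / r e = Ceff ep s t r)
    (hOhm : ∀ e, f e = (φ (ep e).1 - φ (ep e).2) / r e)
    (hβ : f h ^ 2 * r h = β * ∑ e, r e * f e ^ 2)
    (hr' : ∀ e, r' e = if e = h then (1 + ε) * r e else r e) :
    Reff ep s t r' ≥ (1 + ε * β / 2) * Reff ep s t r :=
  reff_increase_of_slight_scaling_general ep s t hst r r' hr f φ h β ε hβ0 hε0 hε1 hφs hφt hmin hOhm
    hβ hr'
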